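/- arXiv:1001.0064 — 8 statements merged into one kernel-verified Lean document; each statement's English description precedes it below -/
import Mathlib

section
/- Let (B,⌊·,·⌋) be an SSD space, f ∈ PC(B) and f ≥ q on B. Then f^@ = q on P_q(f), i.e. for every a ∈ B with f(a) = q(a) one has f^@(a) = q(a). -/
noncomputable section

variable {B : Type*} [AddCommGroup B] [Module ℝ B]

/-- The quadratic form `q(b) = ½⌊b,b⌋` associated with a bilinear form. -/
def qForm (br : B →ₗ[ℝ] B →ₗ[ℝ] ℝ) (b : B) : ℝ := (1 / 2) * br b b

/-- The intrinsic conjugate `f^@(c) = sup_{b} (⌊b,c⌋ - f(b))`. -/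
def intrinsicConj (br : B →ₗ[ℝ] B →ₗ[ℝ] ℝ) (f : B → EReal) (c : B) : EReal :=
  ⨆ b : B, ((br b c : ℝ) : EReal) - f b

/-- A proper function from `B` into `(-∞,∞]`: never `⊥` and somewhere finite. -/
def ProperFn (f : B → EReal) : Prop := (∀ b, f b ≠ ⊥) ∧ ∃ b, f b ≠ ⊤

/-- Convexity for `(-∞,∞]`-valued functions. -/
def ConvexFn (f : B → EReal) : Prop :=
  ∀ b c : B, ∀ t : ℝ, 0 ≤ t → t ≤ 1 →
    f (t • b + (1 - t) • c) ≤ (t : EReal) * f b + ((1 - t : ℝ) : EReal) * f c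

theorem qForm_smul_add_one_sub_smul (br : B →ₗ[ℝ] B →ₗ[ℝ] ℝ)
    (hsymm : ∀ b c : B, br b c = br c b) (a b : B) (t : ℝ) :
    qForm br (t • b + (1 - t) • a)
      = qForm br a + t * (br b a - br a a) + t ^ 2 * qForm br (b - a) := by
  simp only [qForm, map_add, map_sub, map_smul, LinearMap.add_apply, LinearMap.sub_apply,
    LinearMap.smul_apply, smul_eq_mul, hsymm a b]
  ring

theorem le_of_forall_mem_Ioc_add_mul_le {x y z : ℝ} (h : ∀ t ∈ Set.Ioc (0 : ℝ) 1, x + t * y ≤ z) :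
    x ≤ z := by
  have hlim : Filter.Tendsto (fun t : ℝ => x + t * y) (nhdsWithin 0 (Set.Ioi 0)) (nhds x) := by
    refine (Continuous.tendsto' ?_ 0 x ?_).mono_left nhdsWithin_le_nhds
    · fun_prop
    · simp
  exact le_of_tendsto hlim (Filter.mem_of_superset (Ioc_mem_nhdsGT zero_lt_one) h)

/-- Compare `q ≤ f` with convexity of `f` on the segment from `a` to `b`, divide by the
length `t` of the segment and let `t → 0`. -/
theorem br_sub_le_qForm_of_eq_qForm (br : B →ₗ[ℝ] B →ₗ[ℝ] ℝ)
    (hsymm : ∀ b c : B, br b c = br c b) {f : B → EReal} (hconv : ConvexFn f)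
    (hfq : ∀ b : B, ((qForm br b : ℝ) : EReal) ≤ f b)
    {a : B} (ha : f a = ((qForm br a : ℝ) : EReal)) {b : B} {r : ℝ} (hb : f b = r) :
    br b a - r ≤ qForm br a := by
  refine le_of_forall_mem_Ioc_add_mul_le (y := qForm br (b - a)) fun t ⟨ht0, ht1⟩ => ?_
  have hseg : qForm br (t • b + (1 - t) • a) ≤ t * r + (1 - t) * qForm br a := by
    have := (hfq _).trans (hconv b a t ht0.le ht1)
    rwa [hb, ha, ← EReal.coe_mul, ← EReal.coe_mul, ← EReal.coe_add, EReal.coe_le_coe_iff] at this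
  rw [qForm_smul_add_one_sub_smul br hsymm] at hseg
  have hqa : br a a = 2 * qForm br a := by simp only [qForm]; ring
  nlinarith

theorem stmt0_general (br : B →ₗ[ℝ] B →ₗ[ℝ] ℝ)
    (hsymm : ∀ b c : B, br b c = br c b)
    (f : B → EReal) (hconv : ConvexFn f)
    (hfq : ∀ b : B, ((qForm br b : ℝ) : EReal) ≤ f b)
    (a : B) (ha : f a = ((qForm br a : ℝ) : EReal)) :
    intrinsicConj br f a = ((qForm br a : ℝ) : EReal) := by
  refine le_antisymm (iSup_le fun b => ?_) ?_
  · cases hb : f b using EReal.rec with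
    | bot => exact absurd hb (ne_bot_of_le_ne_bot (EReal.coe_ne_bot _) (hfq b))
    | coe r =>
      rw [← EReal.coe_sub, EReal.coe_le_coe_iff]
      exact br_sub_le_qForm_of_eq_qForm br hsymm hconv hfq ha hb
    | top => simp
  · have hqa : qForm br a = br a a - qForm br a := by simp only [qForm]; ring
    calc ((qForm br a : ℝ) : EReal) = ((br a a : ℝ) : EReal) - f a := by
          rw [ha, ← EReal.coe_sub, ← hqa]
      _ ≤ intrinsicConj br f a := le_iSup (fun b => ((br b a : ℝ) : EReal) - f b) a

/-- if `f ∈ PC(B)` and `f ≥ q` on `B`, then `f^@ = q` on `P_q(f)`. -/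
theorem stmt0 [Nontrivial B] (br : B →ₗ[ℝ] B →ₗ[ℝ] ℝ)
    (hsymm : ∀ b c : B, br b c = br c b)
    (f : B → EReal) (hproper : ProperFn f) (hconv : ConvexFn f)
    (hfq : ∀ b : B, ((qForm br b : ℝ) : EReal) ≤ f b)
    (a : B) (ha : f a = ((qForm br a : ℝ) : EReal)) :
    intrinsicConj br f a = ((qForm br a : ℝ) : EReal) :=
  stmt0_general br hsymm f hconv hfq a ha
end
end

section
/- Let (B,⌊·,·⌋) be an SSD space and A be a nonempty q-positive subset of B. Then Φ_A^@ ≥ Φ_A on B. -/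
noncomputable section

variable {B : Type*} [AddCommGroup B] [Module ℝ B]

/-- `A` is q-positive: nonempty and `q(b - c) ≥ 0` for all `b, c ∈ A`. -/
def QPos (br : B →ₗ[ℝ] B →ₗ[ℝ] ℝ) (A : Set B) : Prop :=
  A.Nonempty ∧ ∀ b ∈ A, ∀ c ∈ A, 0 ≤ qForm br (b - c)

/-- `A` is maximally q-positive. -/
def MaxQPos (br : B →ₗ[ℝ] B →ₗ[ℝ] ℝ) (A : Set B) : Prop :=
  QPos br A ∧ ∀ C : Set B, QPos br C → A ⊆ C → C = A

/-- `Φ_A(b) = sup_{a ∈ A} (⌊a,b⌋ - q(a))`. -/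
def PhiA (br : B →ₗ[ℝ] B →ₗ[ℝ] ℝ) (A : Set B) (b : B) : EReal :=
  ⨆ a : A, ((br (a : B) b - qForm br (a : B) : ℝ) : EReal)

/-- `P_q(f) = {b : f(b) = q(b)}`. -/
def Pq (br : B →ₗ[ℝ] B →ₗ[ℝ] ℝ) (f : B → EReal) : Set B :=
  {b : B | f b = ((qForm br b : ℝ) : EReal)}

/-- `N_q(g) = {b : g(b) = -q(b)}`. -/
def Nq (br : B →ₗ[ℝ] B →ₗ[ℝ] ℝ) (f : B → EReal) : Set B :=
  {b : B | f b = ((-(qForm br b) : ℝ) : EReal)}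

/-- `f` is a BC-function: `f^@(b) ≥ f(b) ≥ q(b)` for all `b`. -/
def IsBC (br : B →ₗ[ℝ] B →ₗ[ℝ] ℝ) (f : B → EReal) : Prop :=
  ∀ b : B, ((qForm br b : ℝ) : EReal) ≤ f b ∧ f b ≤ intrinsicConj br f b

/-- `g` is a TBC-function: `g^@(-b) ≥ g(b) ≥ -q(b)` for all `b`. -/
def IsTBC (br : B →ₗ[ℝ] B →ₗ[ℝ] ℝ) (g : B → EReal) : Prop :=
  ∀ b : B, ((-(qForm br b) : ℝ) : EReal) ≤ g b ∧ g b ≤ intrinsicConj br g (-b)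

/-- The effective domain `dom f = {b : f(b) ∈ ℝ}`. -/
def domE (f : B → EReal) : Set B := {b : B | ∃ r : ℝ, f b = (r : EReal)}


/-- if `A` is a nonempty q-positive subset then `Φ_A^@ ≥ Φ_A` on `B`. -/
theorem stmt1 [Nontrivial B] (br : B →ₗ[ℝ] B →ₗ[ℝ] ℝ)
    (hsymm : ∀ b c : B, br b c = br c b)
    (A : Set B) (hA : QPos br A) :
    ∀ b : B, PhiA br A b ≤ intrinsicConj br (PhiA br A) b := by
  have key : ∀ a : A, PhiA br A (a : B) = ((qForm br (a : B) : ℝ) : EReal) := by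
    intro a
    apply le_antisymm
    · apply iSup_le
      intro a'
      have h0 := hA.2 (a' : B) a'.2 (a : B) a.2
      have hq : qForm br ((a' : B) - (a : B))
          = qForm br (a' : B) + qForm br (a : B) - br (a' : B) (a : B) := by
        simp only [qForm, map_sub, LinearMap.sub_apply]
        rw [hsymm (a : B) (a' : B)]
        ring
      rw [hq] at h0
      have : br (a' : B) (a : B) - qForm br (a' : B) ≤ qForm br (a : B) := by linarith
      exact_mod_cast EReal.coe_le_coe_iff.mpr this
    · have := le_iSup (fun a' : A => ((br (a' : B) (a : B) - qForm br (a' : B) : ℝ) : EReal)) a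
      have heq : br (a : B) (a : B) - qForm br (a : B) = qForm br (a : B) := by
        simp [qForm]; ring
      rw [heq] at this
      exact this
  intro b
  rw [PhiA]
  apply iSup_le
  intro a
  have hle : ((br (a : B) b - qForm br (a : B) : ℝ) : EReal)
      = ((br (a : B) b : ℝ) : EReal) - PhiA br A (a : B) := by
    rw [key a, ← EReal.coe_sub]
  rw [hle]
  exact le_iSup (fun c : B => ((br c b : ℝ) : EReal) - PhiA br A c) (a : B)
end
end

section
/- Let (B,⌊·,·⌋) be an SSD space and f ∈ PC(B) be a BC-function. Then P_q(f^@) = P_q(f). -/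
noncomputable section

variable {B : Type*} [AddCommGroup B] [Module ℝ B]

/-!
At `b ∈ P_q(f)`, the bound `f^@(b) ≤ q(b)` is a first-order optimality condition: `f - q ≥ 0`
vanishes at `b`, so along the segment from `b` to any `c` convexity of `f` gives
`q(b + t(c - b)) ≤ q(b) + t (f(c) - q(b))`. Dividing by `t` and letting `t → 0⁺` yields
`⌊b, c⌋ - q(b) ≤ f(c)`, i.e. `⌊c, b⌋ - f(c) ≤ q(b)`. The witness `c = b` gives the reverse
bound, while the inclusion `P_q(f^@) ⊆ P_q(f)` is just `q ≤ f ≤ f^@`.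
-/

open Filter Topology

lemma le_of_forall_add_mul_le {a c d : ℝ} (h : ∀ t : ℝ, 0 < t → t ≤ 1 → a + t * c ≤ d) :
    a ≤ d := by
  have hlim : Tendsto (fun t : ℝ => a + t * c) (𝓝[>] 0) (𝓝 a) := by
    have : Continuous (fun t : ℝ => a + t * c) := by fun_prop
    simpa using (this.tendsto 0).mono_left nhdsWithin_le_nhds
  refine le_of_tendsto hlim ?_
  filter_upwards [Ioc_mem_nhdsGT one_pos] with t ht using h t ht.1 ht.2

section

variable {br : B →ₗ[ℝ] B →ₗ[ℝ] ℝ}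

lemma qForm_add_smul (hsymm : ∀ b c : B, br b c = br c b) (b d : B) (t : ℝ) :
    qForm br (b + t • d) = qForm br b + t * br b d + t ^ 2 * qForm br d := by
  simp only [qForm, map_add, map_smul, LinearMap.add_apply, LinearMap.smul_apply, smul_eq_mul,
    hsymm d b]
  ring

lemma sub_le_qForm_of_forall_qForm_segment_le (hsymm : ∀ b c : B, br b c = br c b)
    {b c : B} {r : ℝ}
    (h : ∀ t : ℝ, 0 < t → t ≤ 1 → qForm br (t • c + (1 - t) • b) ≤ t * r + (1 - t) * qForm br b) :
    br c b - r ≤ qForm br b := by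
  have hbb : br b b = 2 * qForm br b := by simp only [qForm]; ring
  have key : br b c - 2 * qForm br b ≤ r - qForm br b := by
    refine le_of_forall_add_mul_le (c := qForm br (c - b)) fun t ht ht1 => ?_
    have hseg : t • c + (1 - t) • b = b + t • (c - b) := by module
    have := h t ht ht1
    rw [hseg, qForm_add_smul hsymm, map_sub, hbb] at this
    have hdiv : t * (br b c - 2 * qForm br b + t * qForm br (c - b)) ≤ t * (r - qForm br b) := by
      linarith
    exact le_of_mul_le_mul_left hdiv ht
  linarith [hsymm b c]

variable {f : B → EReal}

lemma qForm_segment_le (hconv : ConvexFn f) (hq : ∀ x, (qForm br x : EReal) ≤ f x) {b c : B}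
    {r : ℝ} (hb : f b = qForm br b) (hc : f c = r) {t : ℝ} (ht0 : 0 ≤ t) (ht1 : t ≤ 1) :
    qForm br (t • c + (1 - t) • b) ≤ t * r + (1 - t) * qForm br b := by
  have := (hq _).trans (hconv c b t ht0 ht1)
  rw [hc, hb] at this
  exact_mod_cast this

lemma sub_le_qForm_of_mem_Pq (hsymm : ∀ b c : B, br b c = br c b) (hconv : ConvexFn f)
    (hq : ∀ x, (qForm br x : EReal) ≤ f x) {b : B} (hb : b ∈ Pq br f) (c : B) :
    (br c b : EReal) - f c ≤ qForm br b := by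
  rcases eq_or_ne (f c) ⊤ with htop | htop
  · simp [htop]
  · lift f c to ℝ using ⟨htop, ne_bot_of_le_ne_bot (EReal.coe_ne_bot _) (hq c)⟩ with r hr
    have := sub_le_qForm_of_forall_qForm_segment_le hsymm fun t ht ht1 =>
      qForm_segment_le hconv hq hb hr.symm ht.le ht1
    exact_mod_cast this

lemma intrinsicConj_le_qForm_of_mem_Pq (hsymm : ∀ b c : B, br b c = br c b)
    (hconv : ConvexFn f) (hq : ∀ x, (qForm br x : EReal) ≤ f x) {b : B} (hb : b ∈ Pq br f) :
    intrinsicConj br f b ≤ qForm br b :=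
  iSup_le (sub_le_qForm_of_mem_Pq hsymm hconv hq hb)

lemma qForm_le_intrinsicConj_of_mem_Pq {b : B} (hb : b ∈ Pq br f) :
    (qForm br b : EReal) ≤ intrinsicConj br f b := by
  refine le_trans ?_ (le_iSup (fun c : B => (br c b : EReal) - f c) b)
  rw [show f b = _ from hb, ← EReal.coe_sub, EReal.coe_le_coe_iff, qForm]
  linarith

end

theorem stmt2_general (br : B →ₗ[ℝ] B →ₗ[ℝ] ℝ)
    (hsymm : ∀ b c : B, br b c = br c b)
    (f : B → EReal) (hconv : ConvexFn f)
    (hbc : IsBC br f) :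
    Pq br (intrinsicConj br f) = Pq br f := by
  have hq : ∀ x, (qForm br x : EReal) ≤ f x := fun x => (hbc x).1
  ext b
  constructor
  · intro hb
    exact le_antisymm ((hbc b).2.trans_eq hb) (hq b)
  · intro hb
    exact le_antisymm (intrinsicConj_le_qForm_of_mem_Pq hsymm hconv hq hb)
      (qForm_le_intrinsicConj_of_mem_Pq hb)

/-- if `f ∈ PC(B)` is a BC-function then `P_q(f^@) = P_q(f)`. -/
theorem stmt2 [Nontrivial B] (br : B →ₗ[ℝ] B →ₗ[ℝ] ℝ)
    (hsymm : ∀ b c : B, br b c = br c b)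
    (f : B → EReal) (hproper : ProperFn f) (hconv : ConvexFn f)
    (hbc : IsBC br f) :
    Pq br (intrinsicConj br f) = Pq br f :=
  stmt2_general br hsymm f hconv hbc
end
end

section
/- Let (B,⌊·,·⌋) be an SSD space and A be a maximally q-positive subset of B. Then Φ_A is a BC-function, and P_q(Φ_A^@) = P_q(Φ_A) = A. -/
noncomputable section

variable {B : Type*} [AddCommGroup B] [Module ℝ B]

/-!
For `a ∈ A`, q-positivity of `A` gives `⌊a,b⌋ - q(a) ≤ q(b)` whenever `b ∈ A`, with equality
at `a = b`, so `Φ_A = q` on `A`. Conversely, `Φ_A(b) ≤ q(b)` says exactly that `q(b - a) ≥ 0`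
for all `a ∈ A`, so by maximality `b ∈ A`; hence `Φ_A ≥ q`, and `P_q(Φ_A) = A`.
As a supremum of affine functions `Φ_A` is convex. Testing the supremum defining `Φ_A^@(b)`
at `a ∈ A` gives `Φ_A ≤ Φ_A^@`, while for `b ∈ A` the bound `Φ_A(c) ≥ ⌊b,c⌋ - q(b)` gives
`Φ_A^@(b) ≤ q(b)`; together with `q ≤ Φ_A ≤ Φ_A^@` this yields `P_q(Φ_A^@) = A`.
-/

section SSD

variable {br : B →ₗ[ℝ] B →ₗ[ℝ] ℝ} {A : Set B}

lemma qForm_sub_comm (b c : B) : qForm br (b - c) = qForm br (c - b) := by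
  simp only [qForm, ← neg_sub b c, map_neg, LinearMap.neg_apply, neg_neg]

lemma qForm_sub (hsymm : ∀ b c : B, br b c = br c b) (b c : B) :
    qForm br (b - c) = qForm br b + qForm br c - br c b := by
  simp only [qForm, map_sub, LinearMap.sub_apply]
  rw [hsymm b c]
  ring

lemma QPos.insert (hA : QPos br A) {b : B} (hb : ∀ a ∈ A, 0 ≤ qForm br (b - a)) :
    QPos br (insert b A) := by
  refine ⟨Set.insert_nonempty b A, ?_⟩
  rintro x (rfl | hx) y (rfl | hy)
  · simp [qForm]
  · exact hb y hy
  · exact qForm_sub_comm x y ▸ hb x hx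
  · exact hA.2 x hx y hy

lemma le_phiA {a : B} (ha : a ∈ A) (b : B) :
    ((br a b - qForm br a : ℝ) : EReal) ≤ PhiA br A b :=
  le_iSup (fun a : A => ((br (a : B) b - qForm br (a : B) : ℝ) : EReal)) ⟨a, ha⟩

lemma phiA_eq_qForm_of_mem (hsymm : ∀ b c : B, br b c = br c b) (hA : QPos br A) {b : B}
    (hb : b ∈ A) : PhiA br A b = qForm br b := by
  refine le_antisymm (iSup_le fun ⟨a, ha⟩ => ?_) ?_
  · have := hA.2 b hb a ha
    rw [qForm_sub hsymm] at this
    exact EReal.coe_le_coe_iff.mpr (by linarith)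
  · convert le_phiA hb b using 2
    simp only [qForm]
    ring

lemma MaxQPos.mem_of_phiA_le_qForm (hsymm : ∀ b c : B, br b c = br c b) (hA : MaxQPos br A)
    {b : B} (h : PhiA br A b ≤ qForm br b) : b ∈ A := by
  have hb : ∀ a ∈ A, 0 ≤ qForm br (b - a) := fun a ha => by
    have := EReal.coe_le_coe_iff.mp ((le_phiA ha b).trans h)
    rw [qForm_sub hsymm]
    linarith
  rw [← hA.2 _ (hA.1.insert hb) (Set.subset_insert b A)]
  exact Set.mem_insert b A

lemma MaxQPos.qForm_le_phiA (hsymm : ∀ b c : B, br b c = br c b) (hA : MaxQPos br A) (b : B) :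
    (qForm br b : EReal) ≤ PhiA br A b := by
  rcases le_total (PhiA br A b) (qForm br b) with h | h
  · exact (phiA_eq_qForm_of_mem hsymm hA.1 (hA.mem_of_phiA_le_qForm hsymm h)).ge
  · exact h

lemma MaxQPos.pq_phiA (hsymm : ∀ b c : B, br b c = br c b) (hA : MaxQPos br A) :
    Pq br (PhiA br A) = A :=
  Set.ext fun _ => ⟨fun h => hA.mem_of_phiA_le_qForm hsymm h.le,
    phiA_eq_qForm_of_mem hsymm hA.1⟩

lemma MaxQPos.properFn_phiA (hsymm : ∀ b c : B, br b c = br c b) (hA : MaxQPos br A) :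
    ProperFn (PhiA br A) := by
  obtain ⟨a, ha⟩ := hA.1.1
  refine ⟨fun b => ((EReal.bot_lt_coe _).trans_le (hA.qForm_le_phiA hsymm b)).ne', a, ?_⟩
  rw [phiA_eq_qForm_of_mem hsymm hA.1 ha]
  exact EReal.coe_ne_top _

lemma convexFn_phiA : ConvexFn (PhiA br A) := by
  intro b c t ht ht1
  refine iSup_le fun ⟨a, ha⟩ => ?_
  have hlin : br a (t • b + (1 - t) • c) - qForm br a
      = t * (br a b - qForm br a) + (1 - t) * (br a c - qForm br a) := by
    simp only [map_add, map_smul, smul_eq_mul]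
    ring
  rw [hlin, EReal.coe_add, EReal.coe_mul, EReal.coe_mul]
  exact add_le_add
    (mul_le_mul_of_nonneg_left (le_phiA ha b) (EReal.coe_nonneg.mpr ht))
    (mul_le_mul_of_nonneg_left (le_phiA ha c) (EReal.coe_nonneg.mpr (sub_nonneg.mpr ht1)))

lemma phiA_le_intrinsicConj (hsymm : ∀ b c : B, br b c = br c b) (hA : QPos br A) (b : B) :
    PhiA br A b ≤ intrinsicConj br (PhiA br A) b := by
  refine iSup_le fun ⟨a, ha⟩ => ?_
  rw [EReal.coe_sub, ← phiA_eq_qForm_of_mem hsymm hA ha]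
  exact le_iSup (fun c => ((br c b : ℝ) : EReal) - PhiA br A c) a

lemma intrinsicConj_phiA_le_qForm (hsymm : ∀ b c : B, br b c = br c b) {b : B} (hb : b ∈ A) :
    intrinsicConj br (PhiA br A) b ≤ qForm br b := by
  refine iSup_le fun c => ?_
  calc ((br c b : ℝ) : EReal) - PhiA br A c
      ≤ ((br c b : ℝ) : EReal) - ((br b c - qForm br b : ℝ) : EReal) :=
        EReal.sub_le_sub le_rfl (le_phiA hb c)
    _ = qForm br b := by
        rw [← EReal.coe_sub, EReal.coe_eq_coe_iff, hsymm c b]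
        ring

lemma MaxQPos.pq_intrinsicConj_phiA (hsymm : ∀ b c : B, br b c = br c b) (hA : MaxQPos br A) :
    Pq br (intrinsicConj br (PhiA br A)) = A := by
  ext b
  refine ⟨fun h => hA.mem_of_phiA_le_qForm hsymm ((phiA_le_intrinsicConj hsymm hA.1 b).trans h.le),
    fun hb => ?_⟩
  exact le_antisymm (intrinsicConj_phiA_le_qForm hsymm hb)
    ((hA.qForm_le_phiA hsymm b).trans (phiA_le_intrinsicConj hsymm hA.1 b))

end SSD

theorem stmt3_general (br : B →ₗ[ℝ] B →ₗ[ℝ] ℝ)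
    (hsymm : ∀ b c : B, br b c = br c b)
    (A : Set B) (hA : MaxQPos br A) :
    (ProperFn (PhiA br A) ∧ ConvexFn (PhiA br A) ∧ IsBC br (PhiA br A)) ∧
      Pq br (intrinsicConj br (PhiA br A)) = A ∧ Pq br (PhiA br A) = A :=
  ⟨⟨hA.properFn_phiA hsymm, convexFn_phiA,
      fun b => ⟨hA.qForm_le_phiA hsymm b, phiA_le_intrinsicConj hsymm hA.1 b⟩⟩,
    hA.pq_intrinsicConj_phiA hsymm, hA.pq_phiA hsymm⟩

/-- if `A` is maximally q-positive then `Φ_A` is a BC-function and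
`P_q(Φ_A^@) = P_q(Φ_A) = A`. -/
theorem stmt3 [Nontrivial B] (br : B →ₗ[ℝ] B →ₗ[ℝ] ℝ)
    (hsymm : ∀ b c : B, br b c = br c b)
    (A : Set B) (hA : MaxQPos br A) :
    (ProperFn (PhiA br A) ∧ ConvexFn (PhiA br A) ∧ IsBC br (PhiA br A)) ∧
      Pq br (intrinsicConj br (PhiA br A)) = A ∧ Pq br (PhiA br A) = A :=
  stmt3_general br hsymm A hA
end
end

section
/- Let (B,⌊·,·⌋) be an SSD space, ρ : B → B be a linear surjection such that ⌊ρ(b),ρ(c)⌋ = ⌊b,−c⌋ for all b,c ∈ B, and g ∈ PC(B) be a BC-function. Then g∘ρ and g∘(−ρ) are TBC-functions, ρ(dom(g∘ρ)) = dom g, ρ(N_q(g∘ρ)) = P_q(g), −ρ(dom(g∘(−ρ))) = dom g, and −ρ(N_q(g∘(−ρ))) = P_q(g). -/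
noncomputable section

variable {B : Type*} [AddCommGroup B] [Module ℝ B]

/-! A surjection σ with ⌊σb, σc⌋ = ⌊b, −c⌋ turns q into −q, and reindexing the supremum
defining g^@(σb) along σ turns it into (g∘σ)^@(−b); both ρ and −ρ are such maps. -/

section AntiIsometry

variable {br : B →ₗ[ℝ] B →ₗ[ℝ] ℝ} {σ : B → B}

theorem qForm_eq_neg_of_antiIsometry (hσ : ∀ b c : B, br (σ b) (σ c) = br b (-c)) (b : B) :
    qForm br (σ b) = -qForm br b := by
  simp only [qForm, hσ, map_neg]
  ring

theorem intrinsicConj_eq_comp_of_antiIsometry (hσsurj : Function.Surjective σ)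
    (hσ : ∀ b c : B, br (σ b) (σ c) = br b (-c)) (g : B → EReal) (b : B) :
    intrinsicConj br g (σ b) = intrinsicConj br (fun c => g (σ c)) (-b) := by
  rw [intrinsicConj, ← hσsurj.iSup_comp]
  simp only [hσ, intrinsicConj]

theorem IsBC.isTBC_comp (hσsurj : Function.Surjective σ)
    (hσ : ∀ b c : B, br (σ b) (σ c) = br b (-c)) {g : B → EReal} (hg : IsBC br g) :
    IsTBC br (fun b => g (σ b)) := by
  intro b
  obtain ⟨hq_le, hle_conj⟩ := hg (σ b)
  rw [qForm_eq_neg_of_antiIsometry hσ] at hq_le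
  exact ⟨hq_le, hle_conj.trans_eq (intrinsicConj_eq_comp_of_antiIsometry hσsurj hσ g b)⟩

theorem Nq_comp_eq_preimage_Pq (hσ : ∀ b c : B, br (σ b) (σ c) = br b (-c)) (g : B → EReal) :
    Nq br (fun b => g (σ b)) = σ ⁻¹' Pq br g := by
  ext b
  simp only [Nq, Pq, Set.mem_ofPred_eq, Set.mem_preimage, qForm_eq_neg_of_antiIsometry hσ]

theorem image_Nq_comp (hσsurj : Function.Surjective σ)
    (hσ : ∀ b c : B, br (σ b) (σ c) = br b (-c)) (g : B → EReal) :
    σ '' Nq br (fun b => g (σ b)) = Pq br g := by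
  rw [Nq_comp_eq_preimage_Pq hσ, Set.image_preimage_eq _ hσsurj]

end AntiIsometry

theorem stmt5_general (br : B →ₗ[ℝ] B →ₗ[ℝ] ℝ)
    (ρ : B →ₗ[ℝ] B) (hρsurj : Function.Surjective ρ)
    (hρ : ∀ b c : B, br (ρ b) (ρ c) = br b (-c))
    (g : B → EReal)
    (hbc : IsBC br g) :
    IsTBC br (fun b : B => g (ρ b)) ∧
    IsTBC br (fun b : B => g (-(ρ b))) ∧
    (fun b : B => ρ b) '' domE (fun b : B => g (ρ b)) = domE g ∧
    (fun b : B => ρ b) '' Nq br (fun b : B => g (ρ b)) = Pq br g ∧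
    (fun b : B => -(ρ b)) '' domE (fun b : B => g (-(ρ b))) = domE g ∧
    (fun b : B => -(ρ b)) '' Nq br (fun b : B => g (-(ρ b))) = Pq br g := by
  have hnegρsurj : Function.Surjective fun b => -(ρ b) := neg_surjective.comp hρsurj
  have hnegρ : ∀ b c : B, br (-(ρ b)) (-(ρ c)) = br b (-c) := by
    simpa only [map_neg, LinearMap.neg_apply, neg_neg] using hρ
  exact ⟨hbc.isTBC_comp hρsurj hρ, hbc.isTBC_comp hnegρsurj hnegρ,
    Set.image_preimage_eq (domE g) hρsurj, image_Nq_comp hρsurj hρ g,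
    Set.image_preimage_eq (domE g) hnegρsurj, image_Nq_comp hnegρsurj hnegρ g⟩

/-- if `ρ` is a linear surjection with `⌊ρ(b),ρ(c)⌋ = ⌊b,-c⌋` and `g` is a
BC-function, then `g∘ρ` and `g∘(-ρ)` are TBC-functions, `ρ(dom(g∘ρ)) = dom g`,
`ρ(N_q(g∘ρ)) = P_q(g)`, `-ρ(dom(g∘(-ρ))) = dom g` and `-ρ(N_q(g∘(-ρ))) = P_q(g)`. -/
theorem stmt5 [Nontrivial B] (br : B →ₗ[ℝ] B →ₗ[ℝ] ℝ)
    (hsymm : ∀ b c : B, br b c = br c b)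
    (ρ : B →ₗ[ℝ] B) (hρsurj : Function.Surjective ρ)
    (hρ : ∀ b c : B, br (ρ b) (ρ c) = br b (-c))
    (g : B → EReal) (hproper : ProperFn g) (hconv : ConvexFn g)
    (hbc : IsBC br g) :
    IsTBC br (fun b : B => g (ρ b)) ∧
    IsTBC br (fun b : B => g (-(ρ b))) ∧
    (fun b : B => ρ b) '' domE (fun b : B => g (ρ b)) = domE g ∧
    (fun b : B => ρ b) '' Nq br (fun b : B => g (ρ b)) = Pq br g ∧
    (fun b : B => -(ρ b)) '' domE (fun b : B => g (-(ρ b))) = domE g ∧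
    (fun b : B => -(ρ b)) '' Nq br (fun b : B => g (-(ρ b))) = Pq br g :=
  stmt5_general br ρ hρsurj hρ g hbc
end
end

section
/- Let (B,⌊·,·⌋) be an SSD space, f ∈ PC(B), f ≥ q on B and b,c ∈ B. Then −q(b − c) ≤ [√((f−q)(b)) + √((f−q)(c))]². -/
noncomputable section

variable {B : Type*} [AddCommGroup B] [Module ℝ B]

/-! For `t ∈ [0,1]`, convexity of `f ≥ q` bounds `q(t b + (1-t) c)`, and the identity
`q(t b + (1-t) c) = t q(b) + (1-t) q(c) - t(1-t) q(b-c)` turns this into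
`-q(b-c) t(1-t) ≤ t β + (1-t) γ` with `β = (f-q)(b)`, `γ = (f-q)(c)`. Minimising the right
side divided by `t(1-t)` over `t` (at `t = √γ / (√β + √γ)`, after replacing `β, γ` by
`β + ε, γ + ε` so that both roots are positive) gives `(√β + √γ)²`. -/

lemma le_add_sq_of_forall_mul_le {M s u : ℝ} (hs : 0 < s) (hu : 0 < u)
    (h : ∀ t : ℝ, 0 ≤ t → t ≤ 1 → M * (t * (1 - t)) ≤ t * s ^ 2 + (1 - t) * u ^ 2) :
    M ≤ (s + u) ^ 2 := by
  have hsu : 0 < s + u := by positivity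
  have ht := h (u / (s + u)) (by positivity) ((div_le_one hsu).2 (by linarith))
  have hprod : u / (s + u) * (1 - u / (s + u)) = u * s / (s + u) ^ 2 := by
    field_simp; ring
  have hval : u / (s + u) * s ^ 2 + (1 - u / (s + u)) * u ^ 2 = u * s := by
    field_simp; ring
  rw [hprod, hval, mul_div_assoc', div_le_iff₀ (by positivity)] at ht
  exact le_of_mul_le_mul_right (by linarith) (mul_pos hu hs)

lemma le_sqrt_add_sqrt_sq_of_forall_mul_le {M β γ : ℝ} (hβ : 0 ≤ β) (hγ : 0 ≤ γ)
    (h : ∀ t : ℝ, 0 ≤ t → t ≤ 1 → M * (t * (1 - t)) ≤ t * β + (1 - t) * γ) :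
    M ≤ (Real.sqrt β + Real.sqrt γ) ^ 2 := by
  have hε : ∀ ε : ℝ, 0 < ε → M ≤ (Real.sqrt (β + ε) + Real.sqrt (γ + ε)) ^ 2 := by
    intro ε hε
    refine le_add_sq_of_forall_mul_le (by positivity) (by positivity) fun t ht0 ht1 => ?_
    rw [Real.sq_sqrt (by positivity), Real.sq_sqrt (by positivity)]
    linarith [h t ht0 ht1]
  have hlim : Filter.Tendsto (fun ε : ℝ => (Real.sqrt (β + ε) + Real.sqrt (γ + ε)) ^ 2)
      (nhdsWithin 0 (Set.Ioi 0)) (nhds ((Real.sqrt β + Real.sqrt γ) ^ 2)) := by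
    have hcont : Continuous fun ε : ℝ => (Real.sqrt (β + ε) + Real.sqrt (γ + ε)) ^ 2 := by
      fun_prop
    simpa using (hcont.tendsto 0).mono_left nhdsWithin_le_nhds
  exact ge_of_tendsto hlim (Filter.eventually_of_mem self_mem_nhdsWithin hε)

lemma qForm_smul_add_smul (br : B →ₗ[ℝ] B →ₗ[ℝ] ℝ) (b c : B) (t : ℝ) :
    qForm br (t • b + (1 - t) • c) =
      t * qForm br b + (1 - t) * qForm br c - t * (1 - t) * qForm br (b - c) := by
  simp only [qForm, map_add, map_sub, map_smul, LinearMap.add_apply, LinearMap.sub_apply,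
    LinearMap.smul_apply, smul_eq_mul]
  ring

lemma qForm_smul_add_smul_le {br : B →ₗ[ℝ] B →ₗ[ℝ] ℝ} {f : B → EReal} (hconv : ConvexFn f)
    (hfq : ∀ b : B, ((qForm br b : ℝ) : EReal) ≤ f b)
    {b c : B} {rb rc : ℝ} (hb : f b = (rb : EReal)) (hc : f c = (rc : EReal))
    {t : ℝ} (ht0 : 0 ≤ t) (ht1 : t ≤ 1) :
    qForm br (t • b + (1 - t) • c) ≤ t * rb + (1 - t) * rc := by
  have h := (hfq _).trans (hconv b c t ht0 ht1)
  rw [hb, hc] at h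
  exact_mod_cast h

theorem stmt6_general (br : B →ₗ[ℝ] B →ₗ[ℝ] ℝ)
    (f : B → EReal) (hconv : ConvexFn f)
    (hfq : ∀ b : B, ((qForm br b : ℝ) : EReal) ≤ f b)
    (b c : B) (rb rc : ℝ) (hb : f b = (rb : EReal)) (hc : f c = (rc : EReal)) :
    -(qForm br (b - c)) ≤
      (Real.sqrt (rb - qForm br b) + Real.sqrt (rc - qForm br c)) ^ 2 := by
  have hqb : qForm br b ≤ rb := by exact_mod_cast hb ▸ hfq b
  have hqc : qForm br c ≤ rc := by exact_mod_cast hc ▸ hfq c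
  refine le_sqrt_add_sqrt_sq_of_forall_mul_le (by linarith) (by linarith) fun t ht0 ht1 => ?_
  have h := qForm_smul_add_smul_le hconv hfq hb hc ht0 ht1
  rw [qForm_smul_add_smul] at h
  linarith

/-- if `f ∈ PC(B)`, `f ≥ q` on `B` and `b, c ∈ B`, then
`-q(b-c) ≤ (√((f-q)(b)) + √((f-q)(c)))²` (the inequality being automatic unless both
`f(b)` and `f(c)` are finite, it is stated for finite values). -/
theorem stmt6 [Nontrivial B] (br : B →ₗ[ℝ] B →ₗ[ℝ] ℝ)
    (hsymm : ∀ b c : B, br b c = br c b)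
    (f : B → EReal) (hproper : ProperFn f) (hconv : ConvexFn f)
    (hfq : ∀ b : B, ((qForm br b : ℝ) : EReal) ≤ f b)
    (b c : B) (rb rc : ℝ) (hb : f b = (rb : EReal)) (hc : f c = (rc : EReal)) :
    -(qForm br (b - c)) ≤
      (Real.sqrt (rb - qForm br b) + Real.sqrt (rc - qForm br c)) ^ 2 :=
  stmt6_general br f hconv hfq b c rb rc hb hc
end
end

section
/- Let (B,⌊·,·⌋) be an SSD space, f ∈ PC(B), f ≥ q on B and P_q(f) ≠ ∅. Then P_q(f) is a q-positive subset of B, i.e. q(b − c) ≥ 0 for all b,c ∈ P_q(f). -/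
noncomputable section

variable {B : Type*} [AddCommGroup B] [Module ℝ B]

/-! Convexity of `f` at the midpoint of `b, c ∈ P_q(f)`, combined with `f ≥ q`, gives
`q((b + c)/2) ≤ (q b + q c)/2`; the right side exceeds the left by exactly `q(b - c)/4`. -/

theorem qForm_midpoint (br : B →ₗ[ℝ] B →ₗ[ℝ] ℝ) (b c : B) :
    qForm br ((1 / 2 : ℝ) • b + (1 - 1 / 2 : ℝ) • c) =
      (qForm br b + qForm br c) / 2 - qForm br (b - c) / 4 := by
  simp only [qForm, map_add, map_smul, map_sub, LinearMap.add_apply, LinearMap.smul_apply,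
    LinearMap.sub_apply, smul_eq_mul]
  ring

theorem ConvexFn.midpoint_le_of_eq_coe {f : B → EReal} (hf : ConvexFn f) {b c : B} {x y : ℝ}
    (hb : f b = x) (hc : f c = y) :
    f ((1 / 2 : ℝ) • b + (1 - 1 / 2 : ℝ) • c) ≤ ((x + y) / 2 : ℝ) := by
  have h := hf b c (1 / 2) (by norm_num) (by norm_num)
  rw [hb, hc, ← EReal.coe_mul, ← EReal.coe_mul, ← EReal.coe_add] at h
  convert h using 2
  ring

theorem qForm_sub_nonneg_of_mem_Pq {br : B →ₗ[ℝ] B →ₗ[ℝ] ℝ} {f : B → EReal} (hconv : ConvexFn f)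
    (hfq : ∀ b : B, ((qForm br b : ℝ) : EReal) ≤ f b) {b c : B} (hb : b ∈ Pq br f)
    (hc : c ∈ Pq br f) : 0 ≤ qForm br (b - c) := by
  have h := (hfq _).trans (hconv.midpoint_le_of_eq_coe hb hc)
  rw [EReal.coe_le_coe_iff, qForm_midpoint] at h
  linarith

theorem stmt7_general (br : B →ₗ[ℝ] B →ₗ[ℝ] ℝ)
    (f : B → EReal) (hconv : ConvexFn f)
    (hfq : ∀ b : B, ((qForm br b : ℝ) : EReal) ≤ f b)
    (hne : (Pq br f).Nonempty) :
    QPos br (Pq br f) :=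
  ⟨hne, fun _ hb _ hc => qForm_sub_nonneg_of_mem_Pq hconv hfq hb hc⟩

/-- if `f ∈ PC(B)`, `f ≥ q` on `B` and `P_q(f) ≠ ∅`, then `P_q(f)` is a
q-positive subset of `B`. -/
theorem stmt7 [Nontrivial B] (br : B →ₗ[ℝ] B →ₗ[ℝ] ℝ)
    (hsymm : ∀ b c : B, br b c = br c b)
    (f : B → EReal) (hproper : ProperFn f) (hconv : ConvexFn f)
    (hfq : ∀ b : B, ((qForm br b : ℝ) : EReal) ≤ f b)
    (hne : (Pq br f).Nonempty) :
    QPos br (Pq br f) :=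
  stmt7_general br f hconv hfq hne
end
end

section
/- Let E be a nonzero reflexive Banach space and S : E ⇉ E* and T : E* ⇉ E be maximally monotone. Suppose that either (i) π₁ dom φ_T = E* and there exists w* ∈ E* with E × {w*} ⊂ dom φ_S, or (ii) π₁ dom φ_S = E and there exists w ∈ E with E* × {w} ⊂ dom φ_T. Then (I_E + T∘S)(E) = E, i.e. for every x ∈ E there exists y ∈ E with x ∈ y + T(S(y)). -/
/-!
Fix `x`. The function `h(z) = inf_b [φ_S(b + z) + φ_T(b*, x - b) - ⟨x, b*⟩]` on `E × E*` is
convex, finite everywhere by the domain hypothesis, and `h(0) ≥ 0` because Fitzpatrick functions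
dominate the duality product. Weak compactness of balls (reflexivity) and Baire's theorem bound
`h` above near `0`, so Hahn–Banach gives a continuous linear `c ≤ h`, which by reflexivity is
`⌊·, (u, u*)⌋`. Testing `c ≤ h` on points of the graphs shows that `(u*, x - u)` and `(u, u*)` are
monotonically related to `G(T)` and `G(S)`, hence lie on them by maximality.
-/

open scoped Pointwise

noncomputable section

variable {E : Type*} [NormedAddCommGroup E] [NormedSpace ℝ E]

/-- `E` is reflexive: the canonical map into the double dual is surjective. -/
def ReflexiveSp (E : Type*) [NormedAddCommGroup E] [NormedSpace ℝ E] : Prop :=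
  Function.Surjective (NormedSpace.inclusionInDoubleDual ℝ E)

/-- The SSD pairing `⌊(x,x*),(y,y*)⌋ = ⟨x,y*⟩ + ⟨y,x*⟩` on `E × E*`. -/
def pairP (p r : E × StrongDual ℝ E) : ℝ := r.2 p.1 + p.2 r.1

/-- `q(x,x*) = ⟨x,x*⟩`. -/
def qP (p : E × StrongDual ℝ E) : ℝ := p.2 p.1

/-- The intrinsic conjugate `f^@(c) = sup_b (⌊b,c⌋ - f(b))` on `E × E*`. -/
def conjP (f : E × StrongDual ℝ E → EReal) (c : E × StrongDual ℝ E) : EReal :=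
  ⨆ b : E × StrongDual ℝ E, ((pairP b c : ℝ) : EReal) - f b

/-- A proper function into `(-∞,∞]`: never `⊥` and somewhere finite. -/
def ProperFnP (f : E × StrongDual ℝ E → EReal) : Prop :=
  (∀ p, f p ≠ ⊥) ∧ ∃ p, f p ≠ ⊤

/-- Convexity for `(-∞,∞]`-valued functions on `E × E*`. -/
def ConvexFnP (f : E × StrongDual ℝ E → EReal) : Prop :=
  ∀ p r : E × StrongDual ℝ E, ∀ t : ℝ, 0 ≤ t → t ≤ 1 →
    f (t • p + (1 - t) • r) ≤ (t : EReal) * f p + ((1 - t : ℝ) : EReal) * f r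

/-- `P_q(f) = {b : f(b) = q(b)}`. -/
def PqP (f : E × StrongDual ℝ E → EReal) : Set (E × StrongDual ℝ E) :=
  {p | f p = ((qP p : ℝ) : EReal)}

/-- `f` is a BC-function: `f^@(b) ≥ f(b) ≥ q(b)` for all `b`. -/
def IsBCP (f : E × StrongDual ℝ E → EReal) : Prop :=
  ∀ p : E × StrongDual ℝ E, ((qP p : ℝ) : EReal) ≤ f p ∧ f p ≤ conjP f p

/-- The effective domain of an `EReal`-valued function on `E × E*`. -/
def domP (f : E × StrongDual ℝ E → EReal) : Set (E × StrongDual ℝ E) :=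
  {p | ∃ r : ℝ, f p = (r : EReal)}

/-- A monotone subset of `E × E*`. -/
def MonoSet (A : Set (E × StrongDual ℝ E)) : Prop :=
  ∀ p ∈ A, ∀ r ∈ A, 0 ≤ (p.2 - r.2) (p.1 - r.1)

/-- A maximally monotone subset of `E × E*`. -/
def MaxMono (A : Set (E × StrongDual ℝ E)) : Prop :=
  A.Nonempty ∧ MonoSet A ∧ ∀ C : Set (E × StrongDual ℝ E), MonoSet C → A ⊆ C → C = A

/-- `G(-J) = {(x,x*) : ½‖x‖² + ½‖x*‖² = -⟨x,x*⟩}` where `J` is the duality map. -/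
def GnegJ (E : Type*) [NormedAddCommGroup E] [NormedSpace ℝ E] :
    Set (E × StrongDual ℝ E) :=
  {p | (1 / 2) * ‖p.1‖ ^ 2 + (1 / 2) * ‖p.2‖ ^ 2 = -(p.2 p.1)}

/-- The graph of a multifunction `S : E ⇉ E*`. -/
def graphOf (S : E → Set (StrongDual ℝ E)) : Set (E × StrongDual ℝ E) :=
  {p | p.2 ∈ S p.1}

/-- `S : E ⇉ E*` is maximally monotone. -/
def MaxMonoOp (S : E → Set (StrongDual ℝ E)) : Prop := MaxMono (graphOf S)

/-- The Fitzpatrick function of a multifunction `S : E ⇉ E*`: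
`φ_S(x,x*) = sup_{(s,s*) ∈ G(S)} (⟨x,s*⟩ + ⟨s,x*⟩ - ⟨s,s*⟩)`. -/
def fitz (S : E → Set (StrongDual ℝ E)) (p : E × StrongDual ℝ E) : EReal :=
  ⨆ s : graphOf S,
    (((s : E × StrongDual ℝ E).2 p.1 + p.2 (s : E × StrongDual ℝ E).1
      - (s : E × StrongDual ℝ E).2 (s : E × StrongDual ℝ E).1 : ℝ) : EReal)

/-- The domain `D(S) = {x : Sx ≠ ∅}` of a multifunction. -/
def domOp (S : E → Set (StrongDual ℝ E)) : Set E := {x | (S x).Nonempty}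


/-- The graph of a multifunction `T : E* ⇉ E`. -/
def graphOfT (T : StrongDual ℝ E → Set E) : Set (StrongDual ℝ E × E) :=
  {p | p.2 ∈ T p.1}

/-- A monotone subset of `E* × E` (using the pairing between `E*` and `E`). -/
def MonoSetT (A : Set (StrongDual ℝ E × E)) : Prop :=
  ∀ p ∈ A, ∀ r ∈ A, 0 ≤ (p.1 - r.1) (p.2 - r.2)

/-- `T : E* ⇉ E` is maximally monotone. -/
def MaxMonoOpT (T : StrongDual ℝ E → Set E) : Prop :=
  (graphOfT T).Nonempty ∧ MonoSetT (graphOfT T) ∧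
    ∀ C : Set (StrongDual ℝ E × E), MonoSetT C → graphOfT T ⊆ C → C = graphOfT T

/-- The Fitzpatrick function of `T : E* ⇉ E`:
`φ_T(x*,x) = sup_{(s*,s) ∈ G(T)} (⟨x*,s⟩ + ⟨s*,x⟩ - ⟨s*,s⟩)`. -/
def fitzT (T : StrongDual ℝ E → Set E) (p : StrongDual ℝ E × E) : EReal :=
  ⨆ s : graphOfT T,
    ((p.1 (s : StrongDual ℝ E × E).2 + (s : StrongDual ℝ E × E).1 p.2
      - (s : StrongDual ℝ E × E).1 (s : StrongDual ℝ E × E).2 : ℝ) : EReal)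

/-- The effective domain of an `EReal`-valued function on `E* × E`. -/
def domPT (f : StrongDual ℝ E × E → EReal) : Set (StrongDual ℝ E × E) :=
  {p | ∃ r : ℝ, f p = (r : EReal)}


namespace Monotonicity

variable {X Y : Type*} [AddCommGroup X] [Module ℝ X] [AddCommGroup Y] [Module ℝ Y]
  (B : X →ₗ[ℝ] Y →ₗ[ℝ] ℝ)

def IsMonotoneWrt (G : Set (X × Y)) : Prop :=
  ∀ p ∈ G, ∀ r ∈ G, 0 ≤ B (p.1 - r.1) (p.2 - r.2)

def IsMaxMonotoneWrt (G : Set (X × Y)) : Prop :=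
  IsMonotoneWrt B G ∧ ∀ C, IsMonotoneWrt B C → G ⊆ C → C = G

/-- `FitzLe B G p r` says `φ_G(p) ≤ r` for the Fitzpatrick function of `G` w.r.t. `B`. -/
def FitzLe (G : Set (X × Y)) (p : X × Y) (r : ℝ) : Prop :=
  ∀ s ∈ G, B p.1 s.2 + B s.1 p.2 - B s.1 s.2 ≤ r

variable {B} {G : Set (X × Y)}

lemma apply_sub_sub_symm (p s : X × Y) :
    B (s.1 - p.1) (s.2 - p.2) = B (p.1 - s.1) (p.2 - s.2) := by
  simp only [map_sub, LinearMap.sub_apply]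
  ring

lemma apply_add_apply_sub_apply_eq (p s : X × Y) :
    B p.1 s.2 + B s.1 p.2 - B s.1 s.2 = B p.1 p.2 - B (s.1 - p.1) (s.2 - p.2) := by
  simp only [map_sub, LinearMap.sub_apply]
  ring

lemma IsMaxMonotoneWrt.mem_of_forall_nonneg (hG : IsMaxMonotoneWrt B G) {p : X × Y}
    (hp : ∀ s ∈ G, 0 ≤ B (s.1 - p.1) (s.2 - p.2)) : p ∈ G := by
  have hmono : IsMonotoneWrt B (insert p G) := by
    rintro a (rfl | ha) b (rfl | hb)
    · simp
    · rw [apply_sub_sub_symm]; exact hp b hb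
    · exact hp a ha
    · exact hG.1 a ha b hb
  rw [← hG.2 _ hmono (Set.subset_insert p G)]
  exact Set.mem_insert p G

lemma IsMaxMonotoneWrt.nonpos_of_forall_le (hG : IsMaxMonotoneWrt B G) {p : X × Y} {m : ℝ}
    (hm : ∀ s ∈ G, m ≤ B (s.1 - p.1) (s.2 - p.2)) : m ≤ 0 := by
  by_contra! hpos
  have hp : p ∈ G := hG.mem_of_forall_nonneg fun s hs => hpos.le.trans (hm s hs)
  have := hm p hp
  simp only [sub_self, map_zero] at this
  linarith

lemma FitzLe.mono {p : X × Y} {r r' : ℝ} (h : FitzLe B G p r) (hr : r ≤ r') :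
    FitzLe B G p r' :=
  fun s hs => (h s hs).trans hr

lemma IsMaxMonotoneWrt.apply_le_of_fitzLe (hG : IsMaxMonotoneWrt B G) {p : X × Y} {r : ℝ}
    (h : FitzLe B G p r) : B p.1 p.2 ≤ r := by
  have := hG.nonpos_of_forall_le (p := p) (m := B p.1 p.2 - r) fun s hs => by
    linarith [h s hs, apply_add_apply_sub_apply_eq (B := B) p s]
  linarith

lemma IsMonotoneWrt.fitzLe_self (hG : IsMonotoneWrt B G) {p : X × Y} (hp : p ∈ G) :
    FitzLe B G p (B p.1 p.2) := fun s hs => by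
  linarith [apply_add_apply_sub_apply_eq (B := B) p s, hG s hs p hp]

lemma FitzLe.add_smul {p q : X × Y} {r r' a b : ℝ} (hp : FitzLe B G p r) (hq : FitzLe B G q r')
    (ha : 0 ≤ a) (hb : 0 ≤ b) (hab : a + b = 1) :
    FitzLe B G (a • p + b • q) (a * r + b * r') := fun s hs => by
  have key := add_le_add (mul_le_mul_of_nonneg_left (hp s hs) ha)
    (mul_le_mul_of_nonneg_left (hq s hs) hb)
  simp only [Prod.fst_add, Prod.snd_add, Prod.smul_fst, Prod.smul_snd, map_add, map_smul,
    LinearMap.add_apply, LinearMap.smul_apply, smul_eq_mul]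
  linear_combination key + B s.1 s.2 * hab

lemma fitzLe_of_iSup_eq {p : X × Y} {r : ℝ}
    (h : ⨆ s : G, ((B p.1 (s : X × Y).2 + B (s : X × Y).1 p.2 - B (s : X × Y).1 (s : X × Y).2 : ℝ)
      : EReal) = r) : FitzLe B G p r := fun s hs => by
  have := le_iSup (fun s : G => ((B p.1 (s : X × Y).2 + B (s : X × Y).1 p.2
    - B (s : X × Y).1 (s : X × Y).2 : ℝ) : EReal)) ⟨s, hs⟩
  rw [h] at this
  exact_mod_cast this

lemma mem_and_mem_of_forall_add_nonneg (hG : IsMaxMonotoneWrt B G) {H : Set (Y × X)}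
    (hH : IsMaxMonotoneWrt B.flip H) {a : X} {u v : Y}
    (h : ∀ g ∈ G, ∀ k ∈ H, 0 ≤ B (g.1 - a) (g.2 - v) + B (k.2 - a) (k.1 - u)) :
    (a, v) ∈ G ∧ (u, a) ∈ H := by
  have hGmem : (a, v) ∈ G := hG.mem_of_forall_nonneg fun g hg =>
    neg_nonpos.1 <| hH.nonpos_of_forall_le (p := (u, a)) fun k hk => by
      rw [LinearMap.flip_apply]
      linarith [h g hg k hk]
  refine ⟨hGmem, hH.mem_of_forall_nonneg fun k hk => ?_⟩
  have := h _ hGmem k hk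
  simp only [sub_self, map_zero, zero_add] at this
  rwa [LinearMap.flip_apply]

end Monotonicity

open Monotonicity Filter Metric Set Topology

lemma MaxMonoOp.isMaxMonotoneWrt {S : E → Set (StrongDual ℝ E)} (hS : MaxMonoOp S) :
    IsMaxMonotoneWrt (topDualPairing ℝ E).flip (graphOf S) :=
  ⟨hS.2.1, hS.2.2⟩

lemma MaxMonoOpT.isMaxMonotoneWrt {T : StrongDual ℝ E → Set E} (hT : MaxMonoOpT T) :
    IsMaxMonotoneWrt (topDualPairing ℝ E) (graphOfT T) :=
  ⟨hT.2.1, hT.2.2⟩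

lemma exists_fitzLe_of_mem_domP {S : E → Set (StrongDual ℝ E)} {p : E × StrongDual ℝ E}
    (h : p ∈ domP (fitz S)) : ∃ r, FitzLe (topDualPairing ℝ E).flip (graphOf S) p r :=
  let ⟨r, hr⟩ := h
  ⟨r, fitzLe_of_iSup_eq hr⟩

lemma exists_fitzLe_of_mem_domPT {T : StrongDual ℝ E → Set E} {p : StrongDual ℝ E × E}
    (h : p ∈ domPT (fitzT T)) : ∃ r, FitzLe (topDualPairing ℝ E) (graphOfT T) p r :=
  let ⟨r, hr⟩ := h
  ⟨r, fitzLe_of_iSup_eq hr⟩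

lemma MapClusterPt.prodMk_of_tendsto {α X Y : Type*} [TopologicalSpace X] [TopologicalSpace Y]
    {F : Filter α} {u : α → X} {v : α → Y} {x : X} {y : Y} (hu : MapClusterPt x F u)
    (hv : Tendsto v F (𝓝 y)) : MapClusterPt (x, y) F fun a => (u a, v a) := by
  rw [((𝓝 x).basis_sets.prod_nhds (𝓝 y).basis_sets).mapClusterPt_iff_frequently]
  rintro ⟨s, t⟩ ⟨hs, ht⟩
  exact (mapClusterPt_iff_frequently.1 hu s hs).and_eventually (hv ht)

/-- Banach–Alaoglu in `E** × E*`, pulled back by reflexivity: bounded witnesses `b` have a weak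
cluster point, and the constraints `⌊b, l i⌋ ≤ g i z` pass to it. -/
theorem isClosed_setOf_exists_norm_le_pairP_le (hrefl : ReflexiveSp E) {ι : Type*}
    (l : ι → E × StrongDual ℝ E) (g : ι → E × StrongDual ℝ E → ℝ) (hg : ∀ i, Continuous (g i))
    (r : ℝ) :
    IsClosed {z | ∃ b : E × StrongDual ℝ E, ‖b‖ ≤ r ∧ ∀ i, pairP b (l i) ≤ g i z} := by
  refine IsSeqClosed.isClosed fun zs z hzs hlim => ?_
  choose b hbr hb using hzs
  have hJ (x : E) : ‖NormedSpace.inclusionInDoubleDual ℝ E x‖ = ‖x‖ :=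
    (NormedSpace.inclusionInDoubleDualLi ℝ).norm_map x
  let W := WeakDual ℝ (StrongDual ℝ E) × WeakDual ℝ E
  let Φ : ℕ → W := fun k =>
    (StrongDual.toWeakDual (NormedSpace.inclusionInDoubleDual ℝ E (b k).1),
      StrongDual.toWeakDual (b k).2)
  have hK : IsCompact ((WeakDual.toStrongDual ⁻¹' closedBall 0 r) ×ˢ
      (WeakDual.toStrongDual ⁻¹' closedBall 0 r) : Set W) :=
    (WeakDual.isCompact_closedBall 0 r).prod (WeakDual.isCompact_closedBall 0 r)
  have hΦK : ∀ k, Φ k ∈ (WeakDual.toStrongDual ⁻¹' closedBall 0 r) ×ˢ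
      (WeakDual.toStrongDual ⁻¹' closedBall 0 r) := fun k => by
    have := norm_prod_le_iff.1 (hbr k)
    exact ⟨(mem_closedBall_zero_iff (E := StrongDual ℝ (StrongDual ℝ E))).2
      ((hJ _).trans_le this.1), (mem_closedBall_zero_iff (E := StrongDual ℝ E)).2 this.2⟩
  obtain ⟨w, hwK, hw⟩ := hK.exists_mapClusterPt (f := atTop)
    (le_principal_iff.2 (mem_map.2 (Eventually.of_forall hΦK)))
  obtain ⟨u, hu⟩ := hrefl (WeakDual.toStrongDual w.1)
  let C : Set (W × (E × StrongDual ℝ E)) := {q | ∀ i, q.1.1 (l i).2 + q.1.2 (l i).1 ≤ g i q.2}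
  have hC : IsClosed C := by
    simp only [C, ofPred_forall]
    refine isClosed_iInter fun i => isClosed_le ?_ ((hg i).comp continuous_snd)
    exact ((WeakDual.eval_continuous _).comp (continuous_fst.comp continuous_fst)).add
      ((WeakDual.eval_continuous _).comp (continuous_snd.comp continuous_fst))
  have hwz : (w, z) ∈ C :=
    hC.mem_of_mapClusterPt (hw.prodMk_of_tendsto hlim) (Eventually.of_forall fun k => hb k)
  refine ⟨(u, WeakDual.toStrongDual w.2), norm_prod_le_iff.2 ⟨?_, ?_⟩, fun i => ?_⟩
  · rw [← hJ, hu]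
    exact (mem_closedBall_zero_iff (E := StrongDual ℝ (StrongDual ℝ E))).1 hwK.1
  · exact (mem_closedBall_zero_iff (E := StrongDual ℝ E)).1 hwK.2
  · calc pairP (u, WeakDual.toStrongDual w.2) (l i)
        = WeakDual.toStrongDual w.1 (l i).2 + w.2 (l i).1 := by rw [← hu]; rfl
      _ ≤ g i z := hwz i

lemma exists_eq_pairP_of_reflexive (hrefl : ReflexiveSp E) (c : E × StrongDual ℝ E →L[ℝ] ℝ) :
    ∃ q : E × StrongDual ℝ E, ∀ z, c z = pairP z q := by
  obtain ⟨u, hu⟩ := hrefl (c.comp (ContinuousLinearMap.inr ℝ E (StrongDual ℝ E)))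
  refine ⟨(u, c.comp (ContinuousLinearMap.inl ℝ E (StrongDual ℝ E))), fun z => ?_⟩
  rw [← c.comp_inl_add_comp_inr z, ← hu]
  rfl

section EpigraphLike

variable {F : Type*} [NormedAddCommGroup F] [NormedSpace ℝ F] {A : Set (F × ℝ)}

/-- A Baire category argument: some `D n` has interior, on which `A` has bounded height, and
convexity moves this bound to a neighbourhood of `0`. -/
theorem exists_mem_interior_of_iUnion_isClosed [CompleteSpace F] (hA : Convex ℝ A)
    (hup : ∀ z t t', (z, t) ∈ A → t ≤ t' → (z, t') ∈ A) {D : ℕ → Set F}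
    (hD : ∀ n, IsClosed (D n)) (hcover : ⋃ n, D n = univ)
    (hDA : ∀ n, ∃ M, ∀ z ∈ D n, (z, M) ∈ A) : ∃ t, ((0 : F), t) ∈ interior A := by
  obtain ⟨n, z₀, hz₀⟩ := nonempty_interior_of_iUnion_of_closed hD hcover
  obtain ⟨δ, hδ, hball⟩ := Metric.isOpen_iff.1 isOpen_interior z₀ hz₀
  obtain ⟨M, hM⟩ := hDA n
  obtain ⟨m, hm⟩ := mem_iUnion.1 (hcover ▸ mem_univ (-z₀))
  obtain ⟨M', hM'⟩ := hDA m
  have hbox : ball (0 : F) (δ / 2) ×ˢ Ioi ((M + M') / 2) ⊆ A := by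
    rintro ⟨w, t⟩ ⟨hw, ht⟩
    have hw' : z₀ + (2 : ℝ) • w ∈ ball z₀ δ := by
      rw [mem_ball_zero_iff] at hw
      rw [mem_ball, dist_eq_norm, add_sub_cancel_left, norm_smul, Real.norm_two]
      linarith
    have hmid := hA (hM _ (interior_subset (hball hw'))) (hM' _ hm)
      (by norm_num : (0 : ℝ) ≤ 1 / 2) (by norm_num : (0 : ℝ) ≤ 1 / 2) (by norm_num)
    have e : (1 / 2 : ℝ) • (z₀ + (2 : ℝ) • w, M) + (1 / 2 : ℝ) • (-z₀, M')
        = (w, (M + M') / 2) := by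
      ext
      · simp only [Prod.fst_add, Prod.smul_fst]
        module
      · simp only [Prod.snd_add, Prod.smul_snd, smul_eq_mul]
        ring
    exact hup _ _ _ (e ▸ hmid) ht.le
  exact ⟨(M + M') / 2 + 1, interior_maximal hbox (isOpen_ball.prod isOpen_Ioi)
    ⟨mem_ball_self (by positivity), by simp⟩⟩

/-- Hahn–Banach: `(0, 0)` is not interior to `A`, and the separating functional is
non-vertical because `A` has an interior point on the vertical axis. -/
theorem exists_continuousLinearMap_le_of_convex (hA : Convex ℝ A) {t₀ : ℝ}
    (ht₀ : ((0 : F), t₀) ∈ interior A) (hpos : ∀ t, ((0 : F), t) ∈ A → 0 ≤ t) :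
    ∃ c : F →L[ℝ] ℝ, ∀ p ∈ A, c p.1 ≤ p.2 := by
  have h0 : ((0 : F), (0 : ℝ)) ∉ interior A := by
    intro h
    obtain ⟨ε, hε, hball⟩ := Metric.isOpen_iff.1 isOpen_interior _ h
    have hmem : ((0 : F), -(ε / 2)) ∈ A := interior_subset <| hball <| by
      rw [mem_ball, Prod.dist_eq, dist_self, Real.dist_eq, sub_zero, abs_neg,
        abs_of_pos (half_pos hε), max_lt_iff]
      exact ⟨hε, half_lt_self hε⟩
    linarith [hpos _ hmem]
  obtain ⟨ℓ, hℓ⟩ := geometric_hahn_banach_open_point hA.interior isOpen_interior h0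
  rw [Prod.mk_zero_zero, map_zero] at hℓ
  have hle : ∀ p ∈ A, ℓ p ≤ 0 := by
    intro p hp
    have hp' : p ∈ closure (interior A) := by
      rw [hA.closure_interior_eq_closure_of_nonempty_interior ⟨_, ht₀⟩]
      exact subset_closure hp
    exact closure_minimal (fun q hq => (hℓ q hq).le) (isClosed_le ℓ.continuous continuous_const) hp'
  have hsplit : ∀ p : F × ℝ, ℓ p = ℓ (p.1, 0) + p.2 * ℓ (0, 1) := by
    intro p
    conv_lhs => rw [show p = (p.1, 0) + p.2 • ((0 : F), (1 : ℝ)) by ext <;> simp]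
    rw [map_add, map_smul, smul_eq_mul]
  have hβ : ℓ (0, 1) < 0 := by
    have h1 := hℓ _ ht₀
    rw [hsplit, Prod.mk_zero_zero, map_zero, zero_add] at h1
    nlinarith [hpos t₀ (interior_subset ht₀)]
  refine ⟨(-ℓ (0, 1))⁻¹ • ℓ.comp (ContinuousLinearMap.inl ℝ F ℝ), fun p hp => ?_⟩
  have h1 := hle p hp
  rw [hsplit] at h1
  rw [smul_apply, ContinuousLinearMap.comp_apply,
    ContinuousLinearMap.inl_apply, smul_eq_mul, inv_mul_le_iff₀ (neg_pos.2 hβ)]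
  linarith

end EpigraphLike

section Hammerstein

variable (S : E → Set (StrongDual ℝ E)) (T : StrongDual ℝ E → Set E) (x : E)

/-- The epigraph of `z ↦ inf_b [φ_S(b + z) + φ_T(b*, x - b) - ⟨x, b*⟩]`. -/
def hammersteinEpigraph : Set ((E × StrongDual ℝ E) × ℝ) :=
  {p | ∃ b : E × StrongDual ℝ E, ∃ r₁ r₂ : ℝ,
    FitzLe (topDualPairing ℝ E).flip (graphOf S) (b + p.1) r₁ ∧
    FitzLe (topDualPairing ℝ E) (graphOfT T) (b.2, x - b.1) r₂ ∧ r₁ + r₂ - b.2 x ≤ p.2}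

def hammersteinLevel (n : ℕ) : Set (E × StrongDual ℝ E) :=
  {z | ∃ b : E × StrongDual ℝ E, ‖b‖ ≤ n ∧
    FitzLe (topDualPairing ℝ E).flip (graphOf S) (b + z) n ∧
    FitzLe (topDualPairing ℝ E) (graphOfT T) (b.2, x - b.1) n}

lemma convex_hammersteinEpigraph : Convex ℝ (hammersteinEpigraph S T x) := by
  rintro p ⟨b₁, r₁, r₂, h₁, h₂, h⟩ q ⟨b₂, r₁', r₂', h₁', h₂', h'⟩ a b ha hb hab
  refine ⟨a • b₁ + b • b₂, a * r₁ + b * r₁', a * r₂ + b * r₂', ?_, ?_, ?_⟩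
  · convert h₁.add_smul h₁' ha hb hab using 1
    simp only [Prod.fst_add, Prod.smul_fst]
    module
  · convert h₂.add_smul h₂' ha hb hab using 1
    ext
    · simp only [Prod.snd_add, Prod.smul_snd, Prod.fst_add, Prod.smul_fst]
    · simp only [Prod.snd_add, Prod.smul_snd, Prod.fst_add, Prod.smul_fst]
      linear_combination (norm := module) -(hab • x)
  · have key := add_le_add (mul_le_mul_of_nonneg_left h ha) (mul_le_mul_of_nonneg_left h' hb)
    simp only [Prod.snd_add, Prod.smul_snd, add_apply, smul_apply, smul_eq_mul] at key ⊢
    linarith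

variable {S T x}

lemma mem_hammersteinEpigraph_of_le {z : E × StrongDual ℝ E} {t t' : ℝ}
    (ht : (z, t) ∈ hammersteinEpigraph S T x) (htt' : t ≤ t') :
    (z, t') ∈ hammersteinEpigraph S T x :=
  let ⟨b, r₁, r₂, h₁, h₂, h⟩ := ht
  ⟨b, r₁, r₂, h₁, h₂, h.trans htt'⟩

lemma nonneg_of_mem_hammersteinEpigraph (hS : MaxMonoOp S) (hT : MaxMonoOpT T) {t : ℝ}
    (ht : ((0 : E × StrongDual ℝ E), t) ∈ hammersteinEpigraph S T x) : 0 ≤ t := by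
  obtain ⟨b, r₁, r₂, h₁, h₂, h⟩ := ht
  have q₁ : b.2 b.1 ≤ r₁ := hS.isMaxMonotoneWrt.apply_le_of_fitzLe (add_zero b ▸ h₁)
  have q₂ : b.2 (x - b.1) ≤ r₂ := hT.isMaxMonotoneWrt.apply_le_of_fitzLe h₂
  rw [map_sub] at q₂
  linarith

lemma mem_hammersteinEpigraph_of_mem_hammersteinLevel {n : ℕ} {z : E × StrongDual ℝ E}
    (hz : z ∈ hammersteinLevel S T x n) :
    (z, 2 * n + n * ‖x‖) ∈ hammersteinEpigraph S T x := by
  obtain ⟨b, hb, h₁, h₂⟩ := hz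
  refine ⟨b, n, n, h₁, h₂, ?_⟩
  have : -(b.2 x) ≤ n * ‖x‖ := by
    calc -(b.2 x) ≤ ‖b.2‖ * ‖x‖ := (neg_le_abs _).trans (b.2.le_opNorm x)
      _ ≤ n * ‖x‖ := by gcongr; exact (norm_prod_le_iff.1 hb).2
  linarith

lemma isClosed_hammersteinLevel (hrefl : ReflexiveSp E) (n : ℕ) :
    IsClosed (hammersteinLevel S T x n) := by
  -- `φ_S(b + z) ≤ n` and `φ_T(b*, x - b) ≤ n` as constraints `⌊b, l i⌋ ≤ g i z`
  let l : graphOf S ⊕ graphOfT T → E × StrongDual ℝ E :=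
    Sum.elim (fun s => s) (fun t => ((t : StrongDual ℝ E × E).2, -(t : StrongDual ℝ E × E).1))
  let g : graphOf S ⊕ graphOfT T → E × StrongDual ℝ E → ℝ :=
    Sum.elim (fun s z => n - pairP z s + qP (s : E × StrongDual ℝ E))
      (fun t _ => n - (t : StrongDual ℝ E × E).1 x + (t : StrongDual ℝ E × E).1 t.1.2)
  have hg : ∀ i, Continuous (g i) := by
    rintro (s | t)
    · exact continuous_const.sub (((s : E × StrongDual ℝ E).2.continuous.comp continuous_fst).add
        ((ContinuousLinearMap.apply ℝ ℝ (s : E × StrongDual ℝ E).1).continuous.comp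
          continuous_snd)) |>.add continuous_const
    · exact continuous_const
  convert isClosed_setOf_exists_norm_le_pairP_le hrefl l g hg n using 1
  ext z
  refine exists_congr fun b => and_congr_right fun _ => ?_
  rw [Sum.forall, Subtype.forall, Subtype.forall]
  refine and_congr (forall₂_congr fun s _ => ?_) (forall₂_congr fun t _ => ?_) <;>
  · simp only [l, g, Sum.elim_inl, Sum.elim_inr, pairP, qP, LinearMap.flip_apply,
      topDualPairing_apply, Prod.fst_add, Prod.snd_add, map_add, map_sub, LinearMap.add_apply,
      neg_apply]
    constructor <;> intro h <;> linarith

lemma exists_fitzLe_of_cond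
    (hcond :
      (Prod.fst '' domPT (fitzT T) = (Set.univ : Set (StrongDual ℝ E)) ∧
        ∃ wstar : StrongDual ℝ E, ∀ x : E, (x, wstar) ∈ domP (fitz S)) ∨
      (Prod.fst '' domP (fitz S) = (Set.univ : Set E) ∧
        ∃ w : E, ∀ xstar : StrongDual ℝ E, (xstar, w) ∈ domPT (fitzT T)))
    (z : E × StrongDual ℝ E) : ∃ b : E × StrongDual ℝ E, ∃ r₁ r₂ : ℝ,
      FitzLe (topDualPairing ℝ E).flip (graphOf S) (b + z) r₁ ∧
      FitzLe (topDualPairing ℝ E) (graphOfT T) (b.2, x - b.1) r₂ := by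
  rcases hcond with ⟨hT, w, hS⟩ | ⟨hS, w, hT⟩
  · obtain ⟨p, hp, hp₁⟩ : w - z.2 ∈ Prod.fst '' domPT (fitzT T) := hT ▸ mem_univ _
    obtain ⟨r₁, h₁⟩ := exists_fitzLe_of_mem_domP (hS (x - p.2 + z.1))
    obtain ⟨r₂, h₂⟩ := exists_fitzLe_of_mem_domPT hp
    refine ⟨(x - p.2, w - z.2), r₁, r₂, ?_, ?_⟩
    · convert h₁ using 1
      exact Prod.ext rfl (sub_add_cancel w z.2)
    · convert h₂ using 1
      exact Prod.ext hp₁.symm (sub_sub_cancel x p.2)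
  · obtain ⟨p, hp, hp₁⟩ : x - w + z.1 ∈ Prod.fst '' domP (fitz S) := hS ▸ mem_univ _
    obtain ⟨r₁, h₁⟩ := exists_fitzLe_of_mem_domP hp
    obtain ⟨r₂, h₂⟩ := exists_fitzLe_of_mem_domPT (hT (p.2 - z.2))
    refine ⟨(x - w, p.2 - z.2), r₁, r₂, ?_, ?_⟩
    · convert h₁ using 1
      exact Prod.ext hp₁.symm (sub_add_cancel p.2 z.2)
    · convert h₂ using 1
      exact Prod.ext rfl (sub_sub_cancel x w)

lemma iUnion_hammersteinLevel
    (hcond :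
      (Prod.fst '' domPT (fitzT T) = (Set.univ : Set (StrongDual ℝ E)) ∧
        ∃ wstar : StrongDual ℝ E, ∀ x : E, (x, wstar) ∈ domP (fitz S)) ∨
      (Prod.fst '' domP (fitz S) = (Set.univ : Set E) ∧
        ∃ w : E, ∀ xstar : StrongDual ℝ E, (xstar, w) ∈ domPT (fitzT T))) :
    ⋃ n, hammersteinLevel S T x n = univ := by
  refine eq_univ_of_forall fun z => mem_iUnion.2 ?_
  obtain ⟨b, r₁, r₂, h₁, h₂⟩ := exists_fitzLe_of_cond (x := x) hcond z
  obtain ⟨n, hn⟩ := exists_nat_ge (max ‖b‖ (max r₁ r₂))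
  simp only [max_le_iff] at hn
  exact ⟨n, b, hn.1, h₁.mono hn.2.1, h₂.mono hn.2.2⟩

/-- Writing `c = ⌊·, (u, a)⌋` and testing it at `b = (x - t, t*)`, `b + z = (s, s*)` for
`(t*, t) ∈ G(T)` and `(s, s*) ∈ G(S)` gives the hypothesis of `mem_and_mem_of_forall_add_nonneg`. -/
lemma exists_solution_of_forall_le (hrefl : ReflexiveSp E) (hS : MaxMonoOp S)
    (hT : MaxMonoOpT T) {c : E × StrongDual ℝ E →L[ℝ] ℝ}
    (hc : ∀ p ∈ hammersteinEpigraph S T x, c p.1 ≤ p.2) :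
    ∃ y : E, ∃ xstar ∈ S y, ∃ z ∈ T xstar, x = y + z := by
  obtain ⟨⟨u, a⟩, hua⟩ := exists_eq_pairP_of_reflexive hrefl c
  obtain ⟨hT', hS'⟩ := mem_and_mem_of_forall_add_nonneg hT.isMaxMonotoneWrt hS.isMaxMonotoneWrt
    (a := a) (u := u) (v := x - u) fun g hg k hk => by
      have hmem : (k - (x - g.2, g.1), k.2 k.1 + g.1 g.2 - g.1 x) ∈ hammersteinEpigraph S T x :=
        ⟨(x - g.2, g.1), k.2 k.1, g.1 g.2, by simpa using hS.isMaxMonotoneWrt.1.fitzLe_self hk,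
          by simpa using hT.isMaxMonotoneWrt.1.fitzLe_self hg, le_rfl⟩
      have key := hc _ hmem
      simp only [hua, pairP, Prod.fst_sub, Prod.snd_sub, map_sub, sub_apply, LinearMap.sub_apply,
        topDualPairing_apply] at key ⊢
      linarith
  exact ⟨u, a, hS', x - u, hT', by abel⟩

end Hammerstein

theorem stmt19_general [CompleteSpace E] (hrefl : ReflexiveSp E)
    (S : E → Set (StrongDual ℝ E)) (T : StrongDual ℝ E → Set E)
    (hS : MaxMonoOp S) (hT : MaxMonoOpT T)
    (hcond :
      (Prod.fst '' domPT (fitzT T) = (Set.univ : Set (StrongDual ℝ E)) ∧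
        ∃ wstar : StrongDual ℝ E, ∀ x : E, (x, wstar) ∈ domP (fitz S)) ∨
      (Prod.fst '' domP (fitz S) = (Set.univ : Set E) ∧
        ∃ w : E, ∀ xstar : StrongDual ℝ E, (xstar, w) ∈ domPT (fitzT T))) :
    ∀ x : E, ∃ y : E, ∃ xstar ∈ S y, ∃ z ∈ T xstar, x = y + z := by
  intro x
  have hconv := convex_hammersteinEpigraph S T x
  obtain ⟨t, ht⟩ := exists_mem_interior_of_iUnion_isClosed hconv
    (fun _ _ _ => mem_hammersteinEpigraph_of_le)
    (isClosed_hammersteinLevel hrefl) (iUnion_hammersteinLevel hcond)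
    fun _ => ⟨_, fun _ => mem_hammersteinEpigraph_of_mem_hammersteinLevel⟩
  obtain ⟨c, hc⟩ := exists_continuousLinearMap_le_of_convex hconv ht
    fun _ => nonneg_of_mem_hammersteinEpigraph hS hT
  exact exists_solution_of_forall_le hrefl hS hT hc

/-- an abstract Hammerstein theorem.  If `E` is a nonzero reflexive Banach
space, `S : E ⇉ E*` and `T : E* ⇉ E` are maximally monotone, and either
(i) `π₁ dom φ_T = E*` and `E × {w*} ⊆ dom φ_S` for some `w*`, or
(ii) `π₁ dom φ_S = E` and `E* × {w} ⊆ dom φ_T` for some `w`,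
then `(I_E + T∘S)(E) = E`. -/
theorem stmt19 [CompleteSpace E] [Nontrivial E] (hrefl : ReflexiveSp E)
    (S : E → Set (StrongDual ℝ E)) (T : StrongDual ℝ E → Set E)
    (hS : MaxMonoOp S) (hT : MaxMonoOpT T)
    (hcond :
      (Prod.fst '' domPT (fitzT T) = (Set.univ : Set (StrongDual ℝ E)) ∧
        ∃ wstar : StrongDual ℝ E, ∀ x : E, (x, wstar) ∈ domP (fitz S)) ∨
      (Prod.fst '' domP (fitz S) = (Set.univ : Set E) ∧
        ∃ w : E, ∀ xstar : StrongDual ℝ E, (xstar, w) ∈ domPT (fitzT T))) :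
    ∀ x : E, ∃ y : E, ∃ xstar ∈ S y, ∃ z ∈ T xstar, x = y + z :=
  stmt19_general hrefl S T hS hT hcond
end
end
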